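/- arXiv:1608.08583 — 11 statements merged into one kernel-verified Lean document; each statement's English description precedes it below -/
import Mathlib

section
/- Let H₁, H₂, E be complex Hilbert spaces, let J : E → E be a bounded self-adjoint involution (J = J* and J∘J = I), and let K₁ : E → H₁, K₂ : E → H₂ be bounded operators. Suppose A : H₁ → H₁ and M : H₂ → H₂ are bounded operators satisfying A − A* = 2i·K₁JK₁* and M − M* = 2i·K₂JK₂*. Define the block operator M̂ on H₁ × H₂ by M̂(x₁, x₂) = (A x₁ + 2i·K₁JK₂* x₂, M x₂) and the operator K : E → H₁ × H₂ by K e = (K₁ e, K₂ e). Then M̂ − M̂* = 2i·K J K*. -/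
/-!
On a pair `(x₁, x₂)` everything is a 2×2 block computation. The adjoint of the upper
triangular `M̂` is lower triangular with off-diagonal entry `(2i·K₁JK₂*)* = -2i·K₂JK₁*`
(this is where `J = J*` enters), while `KJK*(x₁, x₂) = (K₁Jy, K₂Jy)` with
`y = K₁*x₁ + K₂*x₂`. The cross terms `±2i·K₁JK₂*x₂`, `±2i·K₂JK₁*x₁` then match, and the
diagonal ones are exactly the hypotheses on `A` and `M`.
-/

open ContinuousLinearMap

section

variable {𝕜 E G₁ G₂ H₁ H₂ : Type*} [RCLike 𝕜]
  [NormedAddCommGroup E] [InnerProductSpace 𝕜 E] [CompleteSpace E]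
  [NormedAddCommGroup G₁] [InnerProductSpace 𝕜 G₁] [CompleteSpace G₁]
  [NormedAddCommGroup G₂] [InnerProductSpace 𝕜 G₂] [CompleteSpace G₂]
  [NormedAddCommGroup H₁] [InnerProductSpace 𝕜 H₁] [CompleteSpace H₁]
  [NormedAddCommGroup H₂] [InnerProductSpace 𝕜 H₂] [CompleteSpace H₂]

theorem ContinuousLinearMap.adjoint_apply_of_apply_eq_toLp_prod
    {K : E →L[𝕜] WithLp 2 (H₁ × H₂)} {K₁ : E →L[𝕜] H₁} {K₂ : E →L[𝕜] H₂}
    (hK : ∀ e, K e = WithLp.toLp 2 (K₁ e, K₂ e)) (y : WithLp 2 (H₁ × H₂)) :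
    adjoint K y = adjoint K₁ y.fst + adjoint K₂ y.snd := by
  refine ext_inner_left 𝕜 fun e => ?_
  rw [adjoint_inner_right, hK, inner_add_right, adjoint_inner_right, adjoint_inner_right,
    WithLp.prod_inner_apply]
  rfl

theorem ContinuousLinearMap.adjoint_apply_of_apply_eq_toLp_block
    {T : WithLp 2 (H₁ × H₂) →L[𝕜] WithLp 2 (G₁ × G₂)}
    {A : H₁ →L[𝕜] G₁} {B : H₂ →L[𝕜] G₁} {C : H₁ →L[𝕜] G₂} {D : H₂ →L[𝕜] G₂}
    (hT : ∀ x₁ x₂, T (WithLp.toLp 2 (x₁, x₂)) = WithLp.toLp 2 (A x₁ + B x₂, C x₁ + D x₂))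
    (y : WithLp 2 (G₁ × G₂)) :
    adjoint T y = WithLp.toLp 2
      (adjoint A y.fst + adjoint C y.snd, adjoint B y.fst + adjoint D y.snd) := by
  refine ext_inner_left 𝕜 fun x => ?_
  obtain ⟨x₁, x₂⟩ := x
  rw [adjoint_inner_right, hT, WithLp.prod_inner_apply, WithLp.prod_inner_apply]
  simp only [WithLp.ofLp_fst, WithLp.ofLp_snd, inner_add_left, inner_add_right,
    adjoint_inner_right]
  ring

theorem ContinuousLinearMap.adjoint_smul_comp_comp_adjoint (c : 𝕜) (S : E →L[𝕜] H₁)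
    {J : E →L[𝕜] E} (hJ : adjoint J = J) (T : E →L[𝕜] H₂) :
    adjoint (c • (S ∘L J ∘L adjoint T)) = starRingEnd 𝕜 c • (T ∘L J ∘L adjoint S) := by
  rw [map_smulₛₗ, adjoint_comp, adjoint_comp, adjoint_adjoint, hJ, comp_assoc]

end

theorem stmt_0_general
    {H₁ H₂ E : Type*}
    [NormedAddCommGroup H₁] [InnerProductSpace ℂ H₁] [CompleteSpace H₁]
    [NormedAddCommGroup H₂] [InnerProductSpace ℂ H₂] [CompleteSpace H₂]
    [NormedAddCommGroup E] [InnerProductSpace ℂ E] [CompleteSpace E]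
    (J : E →L[ℂ] E) (hJsa : adjoint J = J)
    (K₁ : E →L[ℂ] H₁) (K₂ : E →L[ℂ] H₂)
    (A : H₁ →L[ℂ] H₁) (M : H₂ →L[ℂ] H₂)
    (hA : A - adjoint A = (2 * Complex.I) • (K₁ ∘L J ∘L adjoint K₁))
    (hM : M - adjoint M = (2 * Complex.I) • (K₂ ∘L J ∘L adjoint K₂))
    (Mhat : WithLp 2 (H₁ × H₂) →L[ℂ] WithLp 2 (H₁ × H₂))
    (hMhat : ∀ (x₁ : H₁) (x₂ : H₂),
      Mhat ((WithLp.equiv 2 (H₁ × H₂)).symm (x₁, x₂)) =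
        (WithLp.equiv 2 (H₁ × H₂)).symm
          (A x₁ + (2 * Complex.I) • K₁ (J (adjoint K₂ x₂)), M x₂))
    (K : E →L[ℂ] WithLp 2 (H₁ × H₂))
    (hK : ∀ e : E, K e = (WithLp.equiv 2 (H₁ × H₂)).symm (K₁ e, K₂ e)) :
    Mhat - adjoint Mhat = (2 * Complex.I) • (K ∘L J ∘L adjoint K) := by
  have hMhat_block : ∀ x₁ x₂, Mhat (WithLp.toLp 2 (x₁, x₂)) =
      WithLp.toLp 2 (A x₁ + ((2 * Complex.I) • (K₁ ∘L J ∘L adjoint K₂)) x₂,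
        (0 : H₁ →L[ℂ] H₂) x₁ + M x₂) := by
    simpa using hMhat
  have hK_pair : ∀ e, K e = WithLp.toLp 2 (K₁ e, K₂ e) := hK
  ext x : 1
  obtain ⟨x₁, x₂⟩ := x
  have hA₁ := congr($hA x₁)
  have hM₂ := congr($hM x₂)
  simp only [sub_apply, smul_apply, comp_apply] at hA₁ hM₂
  rw [sub_apply, adjoint_apply_of_apply_eq_toLp_block hMhat_block, hMhat_block,
    adjoint_smul_comp_comp_adjoint _ _ hJsa]
  have hconj : starRingEnd ℂ (2 * Complex.I) = -(2 * Complex.I) := by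
    rw [map_mul, Complex.conj_I, map_ofNat, mul_neg]
  simp only [smul_apply, comp_apply, adjoint_apply_of_apply_eq_toLp_prod hK_pair, hK_pair,
    WithLp.toLp_fst, WithLp.toLp_snd, map_zero, zero_apply, zero_add, add_zero, hconj, map_add,
    ← WithLp.toLp_sub, ← WithLp.toLp_smul, Prod.mk_sub_mk, Prod.smul_mk, smul_add]
  congr 2
  · linear_combination (norm := module) hA₁
  · linear_combination (norm := module) hM₂

/-- The state-space operator of an `LF`-coupling: if `A - A* = 2i·K₁JK₁*` and
`M - M* = 2i·K₂JK₂*`, the block operator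
`M̂(x₁, x₂) = (A x₁ + 2i·K₁JK₂* x₂, M x₂)` and the channel operator
`K e = (K₁ e, K₂ e)` satisfy `M̂ - M̂* = 2i·KJK*`. -/
theorem stmt_0
    {H₁ H₂ E : Type*}
    [NormedAddCommGroup H₁] [InnerProductSpace ℂ H₁] [CompleteSpace H₁]
    [NormedAddCommGroup H₂] [InnerProductSpace ℂ H₂] [CompleteSpace H₂]
    [NormedAddCommGroup E] [InnerProductSpace ℂ E] [CompleteSpace E]
    (J : E →L[ℂ] E) (hJsa : adjoint J = J) (hJinv : J ∘L J = 1)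
    (K₁ : E →L[ℂ] H₁) (K₂ : E →L[ℂ] H₂)
    (A : H₁ →L[ℂ] H₁) (M : H₂ →L[ℂ] H₂)
    (hA : A - adjoint A = (2 * Complex.I) • (K₁ ∘L J ∘L adjoint K₁))
    (hM : M - adjoint M = (2 * Complex.I) • (K₂ ∘L J ∘L adjoint K₂))
    (Mhat : WithLp 2 (H₁ × H₂) →L[ℂ] WithLp 2 (H₁ × H₂))
    (hMhat : ∀ (x₁ : H₁) (x₂ : H₂),
      Mhat ((WithLp.equiv 2 (H₁ × H₂)).symm (x₁, x₂)) =
        (WithLp.equiv 2 (H₁ × H₂)).symm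
          (A x₁ + (2 * Complex.I) • K₁ (J (adjoint K₂ x₂)), M x₂))
    (K : E →L[ℂ] WithLp 2 (H₁ × H₂))
    (hK : ∀ e : E, K e = (WithLp.equiv 2 (H₁ × H₂)).symm (K₁ e, K₂ e)) :
    Mhat - adjoint Mhat = (2 * Complex.I) • (K ∘L J ∘L adjoint K) :=
  stmt_0_general J hJsa K₁ K₂ A M hA hM Mhat hMhat K hK
end

section
/- Let H₁, H₂, E be complex Hilbert spaces, let J : E → E be a bounded operator, let K₁ : E → H₁, K₂ : E → H₂ be bounded operators, let A : H₁ → H₁, M : H₂ → H₂, F : H₂ → H₂ be bounded operators, and let z ∈ ℂ be such that A − zI is invertible on H₁ and M − zF is invertible on H₂. Define the block operators on H₁ × H₂ by M̂(x₁, x₂) = (A x₁ + 2i·K₁JK₂* x₂, M x₂), F̂(x₁, x₂) = (x₁, F x₂), and K : E → H₁ × H₂ by K e = (K₁ e, K₂ e). Then the transfer functions multiply: I − 2i·K*(M̂ − zF̂)⁻¹KJ = (I − 2i·K₁*(A − zI)⁻¹K₁J) ∘ (I − 2i·K₂*(M − zF)⁻¹K₂J) as operators on E. -/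
open ContinuousLinearMap

/-! The pencil `M̂ - zF̂` is block upper triangular, with diagonal blocks `A - zI` and `M - zF`
and corner `2iK₁JK₂*`. Solving `(M̂ - zF̂)(a, b) = KJe` by back substitution gives
`b = (M - zF)⁻¹K₂Je` and `a = (A - zI)⁻¹K₁J(e - 2iK₂*b)`. Since `K*(a, b) = K₁*a + K₂*b`, the
vector `e - 2iK₂*b` is the value at `e` of the second transfer function, and substituting it
into `e - 2iK*(a, b)` yields the product of the two transfer functions. -/

theorem apply_toLp_eq_of_comp_blockTriangular_eq_one {R X₁ X₂ : Type*} [Ring R]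
    [AddCommGroup X₁] [Module R X₁] [TopologicalSpace X₁]
    [AddCommGroup X₂] [Module R X₂] [TopologicalSpace X₂] {p : ENNReal}
    {S T : WithLp p (X₁ × X₂) →L[R] WithLp p (X₁ × X₂)}
    {P Pinv : X₁ →L[R] X₁} {B : X₂ →L[R] X₁} {Q Qinv : X₂ →L[R] X₂}
    (hS : ∀ x₁ x₂, S (WithLp.toLp p (x₁, x₂)) = WithLp.toLp p (P x₁ + B x₂, Q x₂))
    (hT : T ∘L S = 1) (hP : P ∘L Pinv = 1) (hQ : Q ∘L Qinv = 1) (y₁ : X₁) (y₂ : X₂) :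
    T (WithLp.toLp p (y₁, y₂)) = WithLp.toLp p (Pinv (y₁ - B (Qinv y₂)), Qinv y₂) := by
  have hP' : P (Pinv (y₁ - B (Qinv y₂))) = y₁ - B (Qinv y₂) := congr($hP _)
  have hQ' : Q (Qinv y₂) = y₂ := congr($hQ _)
  have hsolve :
      S (WithLp.toLp p (Pinv (y₁ - B (Qinv y₂)), Qinv y₂)) = WithLp.toLp p (y₁, y₂) := by
    rw [hS, hP', hQ', sub_add_cancel]
  rw [← hsolve, ← comp_apply, hT, one_apply_eq_self]

theorem adjoint_apply_toLp_of_apply_eq_toLp {𝕜 E H₁ H₂ : Type*} [RCLike 𝕜]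
    [NormedAddCommGroup E] [InnerProductSpace 𝕜 E] [CompleteSpace E]
    [NormedAddCommGroup H₁] [InnerProductSpace 𝕜 H₁] [CompleteSpace H₁]
    [NormedAddCommGroup H₂] [InnerProductSpace 𝕜 H₂] [CompleteSpace H₂]
    {K : E →L[𝕜] WithLp 2 (H₁ × H₂)} {K₁ : E →L[𝕜] H₁} {K₂ : E →L[𝕜] H₂}
    (hK : ∀ e, K e = WithLp.toLp 2 (K₁ e, K₂ e)) (x₁ : H₁) (x₂ : H₂) :
    adjoint K (WithLp.toLp 2 (x₁, x₂)) = adjoint K₁ x₁ + adjoint K₂ x₂ := by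
  refine ext_inner_right 𝕜 fun e => ?_
  rw [adjoint_inner_left, inner_add_left, adjoint_inner_left, adjoint_inner_left, hK,
    WithLp.prod_inner_apply]

theorem stmt_2_general
    {H₁ H₂ E : Type*}
    [NormedAddCommGroup H₁] [InnerProductSpace ℂ H₁] [CompleteSpace H₁]
    [NormedAddCommGroup H₂] [InnerProductSpace ℂ H₂] [CompleteSpace H₂]
    [NormedAddCommGroup E] [InnerProductSpace ℂ E] [CompleteSpace E]
    (J : E →L[ℂ] E) (K₁ : E →L[ℂ] H₁) (K₂ : E →L[ℂ] H₂)
    (A : H₁ →L[ℂ] H₁) (M F : H₂ →L[ℂ] H₂) (z : ℂ)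
    (Ainv : H₁ →L[ℂ] H₁)
    (hAinv₁ : (A - z • 1) ∘L Ainv = 1)
    (MFinv : H₂ →L[ℂ] H₂)
    (hMFinv₁ : (M - z • F) ∘L MFinv = 1)
    (Mhat Fhat : WithLp 2 (H₁ × H₂) →L[ℂ] WithLp 2 (H₁ × H₂))
    (hMhat : ∀ (x₁ : H₁) (x₂ : H₂),
      Mhat ((WithLp.equiv 2 (H₁ × H₂)).symm (x₁, x₂)) =
        (WithLp.equiv 2 (H₁ × H₂)).symm
          (A x₁ + (2 * Complex.I) • K₁ (J (adjoint K₂ x₂)), M x₂))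
    (hFhat : ∀ (x₁ : H₁) (x₂ : H₂),
      Fhat ((WithLp.equiv 2 (H₁ × H₂)).symm (x₁, x₂)) =
        (WithLp.equiv 2 (H₁ × H₂)).symm (x₁, F x₂))
    (K : E →L[ℂ] WithLp 2 (H₁ × H₂))
    (hK : ∀ e : E, K e = (WithLp.equiv 2 (H₁ × H₂)).symm (K₁ e, K₂ e))
    (Minv : WithLp 2 (H₁ × H₂) →L[ℂ] WithLp 2 (H₁ × H₂))
    (hMinv₂ : Minv ∘L (Mhat - z • Fhat) = 1) :
    (1 : E →L[ℂ] E) - (2 * Complex.I) • (adjoint K ∘L Minv ∘L (K ∘L J)) =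
      ((1 : E →L[ℂ] E) -
          (2 * Complex.I) • (adjoint K₁ ∘L Ainv ∘L (K₁ ∘L J))) ∘L
        ((1 : E →L[ℂ] E) -
          (2 * Complex.I) • (adjoint K₂ ∘L MFinv ∘L (K₂ ∘L J))) := by
  simp only [WithLp.equiv_symm_apply] at hMhat hFhat hK
  have hpencil : ∀ x₁ x₂, (Mhat - z • Fhat) (WithLp.toLp 2 (x₁, x₂)) =
      WithLp.toLp 2 ((A - z • 1) x₁ + ((2 * Complex.I) • (K₁ ∘L J ∘L adjoint K₂)) x₂,
        (M - z • F) x₂) := by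
    intro x₁ x₂
    rw [sub_apply, smul_apply, hMhat, hFhat, ← WithLp.toLp_smul, ← WithLp.toLp_sub]
    congr 1
    ext
    · simp only [Prod.fst_sub, Prod.smul_fst, sub_apply, smul_apply, one_apply_eq_self,
        comp_apply]
      abel
    · rfl
  ext e
  have hsolve := apply_toLp_eq_of_comp_blockTriangular_eq_one hpencil hMinv₂ hAinv₁ hMFinv₁
    (K₁ (J e)) (K₂ (J e))
  simp only [comp_apply, sub_apply, smul_apply, one_apply_eq_self, hK, hsolve,
    adjoint_apply_toLp_of_apply_eq_toLp hK, map_sub, map_smul]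
  module

/-- Multiplication theorem for transfer functions of an `LF`-coupling:
`I - 2iK*(M̂ - zF̂)⁻¹KJ = (I - 2iK₁*(A - zI)⁻¹K₁J)(I - 2iK₂*(M - zF)⁻¹K₂J)`. -/
theorem stmt_2
    {H₁ H₂ E : Type*}
    [NormedAddCommGroup H₁] [InnerProductSpace ℂ H₁] [CompleteSpace H₁]
    [NormedAddCommGroup H₂] [InnerProductSpace ℂ H₂] [CompleteSpace H₂]
    [NormedAddCommGroup E] [InnerProductSpace ℂ E] [CompleteSpace E]
    (J : E →L[ℂ] E) (K₁ : E →L[ℂ] H₁) (K₂ : E →L[ℂ] H₂)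
    (A : H₁ →L[ℂ] H₁) (M F : H₂ →L[ℂ] H₂) (z : ℂ)
    (Ainv : H₁ →L[ℂ] H₁)
    (hAinv₁ : (A - z • 1) ∘L Ainv = 1) (hAinv₂ : Ainv ∘L (A - z • 1) = 1)
    (MFinv : H₂ →L[ℂ] H₂)
    (hMFinv₁ : (M - z • F) ∘L MFinv = 1) (hMFinv₂ : MFinv ∘L (M - z • F) = 1)
    (Mhat Fhat : WithLp 2 (H₁ × H₂) →L[ℂ] WithLp 2 (H₁ × H₂))
    (hMhat : ∀ (x₁ : H₁) (x₂ : H₂),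
      Mhat ((WithLp.equiv 2 (H₁ × H₂)).symm (x₁, x₂)) =
        (WithLp.equiv 2 (H₁ × H₂)).symm
          (A x₁ + (2 * Complex.I) • K₁ (J (adjoint K₂ x₂)), M x₂))
    (hFhat : ∀ (x₁ : H₁) (x₂ : H₂),
      Fhat ((WithLp.equiv 2 (H₁ × H₂)).symm (x₁, x₂)) =
        (WithLp.equiv 2 (H₁ × H₂)).symm (x₁, F x₂))
    (K : E →L[ℂ] WithLp 2 (H₁ × H₂))
    (hK : ∀ e : E, K e = (WithLp.equiv 2 (H₁ × H₂)).symm (K₁ e, K₂ e))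
    (Minv : WithLp 2 (H₁ × H₂) →L[ℂ] WithLp 2 (H₁ × H₂))
    (hMinv₁ : (Mhat - z • Fhat) ∘L Minv = 1)
    (hMinv₂ : Minv ∘L (Mhat - z • Fhat) = 1) :
    (1 : E →L[ℂ] E) - (2 * Complex.I) • (adjoint K ∘L Minv ∘L (K ∘L J)) =
      ((1 : E →L[ℂ] E) -
          (2 * Complex.I) • (adjoint K₁ ∘L Ainv ∘L (K₁ ∘L J))) ∘L
        ((1 : E →L[ℂ] E) -
          (2 * Complex.I) • (adjoint K₂ ∘L MFinv ∘L (K₂ ∘L J))) :=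
  stmt_2_general J K₁ K₂ A M F z Ainv hAinv₁ MFinv hMFinv₁ Mhat Fhat hMhat hFhat K hK Minv hMinv₂
end

section
/- Let H and E be complex Hilbert spaces, let J : E → E be a bounded self-adjoint involution (J = J* and J∘J = I), let K : E → H be a bounded operator, and let M : H → H and F : H → H be bounded operators with (M − M*)/(2i) = KJK*. Let z ∈ ℂ be such that both M − zF and Re M − zF are invertible, where Re M = (M + M*)/2. Set W(z) = I − 2i·K*(M − zF)⁻¹KJ and V(z) = K*(Re M − zF)⁻¹K, both operators on E. Then (I + W(z)) ∘ (I + i·V(z)J) = 2I. -/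
open ContinuousLinearMap

/-- For an `F`-system with `Im M = KJK*`, transfer function
`W(z) = I - 2iK*(M - zF)⁻¹KJ` and impedance function
`V(z) = K*(Re M - zF)⁻¹K`, one has `(I + W(z))(I + iV(z)J) = 2I`. -/
theorem stmt_3
    {H E : Type*}
    [NormedAddCommGroup H] [InnerProductSpace ℂ H] [CompleteSpace H]
    [NormedAddCommGroup E] [InnerProductSpace ℂ E] [CompleteSpace E]
    (J : E →L[ℂ] E) (hJsa : adjoint J = J) (hJinv : J ∘L J = 1)
    (K : E →L[ℂ] H) (M F : H →L[ℂ] H)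
    (hIm : (2 * Complex.I)⁻¹ • (M - adjoint M) = K ∘L J ∘L adjoint K)
    (z : ℂ)
    (Rinv : H →L[ℂ] H)
    (hRinv₁ : (M - z • F) ∘L Rinv = 1) (hRinv₂ : Rinv ∘L (M - z • F) = 1)
    (Sinv : H →L[ℂ] H)
    (hSinv₁ : ((2 : ℂ)⁻¹ • (M + adjoint M) - z • F) ∘L Sinv = 1)
    (hSinv₂ : Sinv ∘L ((2 : ℂ)⁻¹ • (M + adjoint M) - z • F) = 1) :
    ((1 : E →L[ℂ] E) +
        ((1 : E →L[ℂ] E) - (2 * Complex.I) • (adjoint K ∘L Rinv ∘L (K ∘L J)))) ∘L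
      ((1 : E →L[ℂ] E) +
        Complex.I • ((adjoint K ∘L Sinv ∘L K) ∘L J)) = (2 : ℂ) • 1 := by
  have hA : Complex.I • (K ∘L J ∘L adjoint K)
      = (M - z • F) - ((2 : ℂ)⁻¹ • (M + adjoint M) - z • F) := by
    rw [← hIm]
    match_scalars <;> (field_simp; try ring)
  have hkey : Rinv ∘L (Complex.I • (K ∘L J ∘L adjoint K)) ∘L Sinv = Sinv - Rinv := by
    rw [hA, sub_comp, comp_sub, ← comp_assoc, hRinv₂, ← comp_assoc,
      comp_assoc Rinv, hSinv₁]
    simp [one_def]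
  set X := adjoint K ∘L Rinv ∘L (K ∘L J) with hX
  set Y := (adjoint K ∘L Sinv ∘L K) ∘L J with hY
  have h2 : Complex.I • (X ∘L Y) = Y - X := by
    have hc : X ∘L Y = adjoint K ∘L (Rinv ∘L (K ∘L J ∘L adjoint K) ∘L Sinv) ∘L (K ∘L J) := by
      simp only [hX, hY, comp_assoc]
    rw [hc]
    calc Complex.I • (adjoint K ∘L (Rinv ∘L (K ∘L J ∘L adjoint K) ∘L Sinv) ∘L (K ∘L J))
        = adjoint K ∘L (Rinv ∘L (Complex.I • (K ∘L J ∘L adjoint K)) ∘L Sinv) ∘L (K ∘L J) := by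
          simp only [comp_smul, smul_comp]
      _ = adjoint K ∘L (Sinv - Rinv) ∘L (K ∘L J) := by rw [hkey]
      _ = Y - X := by simp only [hX, hY, sub_comp, comp_sub, comp_assoc]
  have hXY : X ∘L Y = (-Complex.I) • (Y - X) := by
    rw [← h2, smul_smul, neg_mul, Complex.I_mul_I, neg_neg, one_smul]
  simp only [add_comp, comp_add, sub_comp, comp_smul, smul_comp, one_def, id_comp, comp_id,
    hXY]
  match_scalars <;> (field_simp; ring_nf; first | linear_combination (2*Complex.I)*Complex.I_sq | linear_combination (-2*Complex.I)*Complex.I_sq | skip)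
end

section
/- Let H and E be complex Hilbert spaces, let J : E → E be a bounded self-adjoint involution (J = J* and J∘J = I), let K : E → H be a bounded operator, and let M : H → H and F : H → H be bounded operators with (M − M*)/(2i) = KJK*. Let z ∈ ℂ be such that both M − zF and Re M − zF are invertible, where Re M = (M + M*)/2. Set W(z) = I − 2i·K*(M − zF)⁻¹KJ and V(z) = K*(Re M − zF)⁻¹K. Then (I + i·V(z)J) ∘ (I + W(z)) = 2I. -/
open ContinuousLinearMap

/-- For an `F`-system with `Im M = KJK*`, transfer function
`W(z) = I - 2iK*(M - zF)⁻¹KJ` and impedance function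
`V(z) = K*(Re M - zF)⁻¹K`, one has `(I + iV(z)J)(I + W(z)) = 2I`. -/
theorem stmt_4
    {H E : Type*}
    [NormedAddCommGroup H] [InnerProductSpace ℂ H] [CompleteSpace H]
    [NormedAddCommGroup E] [InnerProductSpace ℂ E] [CompleteSpace E]
    (J : E →L[ℂ] E) (hJsa : adjoint J = J) (hJinv : J ∘L J = 1)
    (K : E →L[ℂ] H) (M F : H →L[ℂ] H)
    (hIm : (2 * Complex.I)⁻¹ • (M - adjoint M) = K ∘L J ∘L adjoint K)
    (z : ℂ)
    (Rinv : H →L[ℂ] H)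
    (hRinv₁ : (M - z • F) ∘L Rinv = 1) (hRinv₂ : Rinv ∘L (M - z • F) = 1)
    (Sinv : H →L[ℂ] H)
    (hSinv₁ : ((2 : ℂ)⁻¹ • (M + adjoint M) - z • F) ∘L Sinv = 1)
    (hSinv₂ : Sinv ∘L ((2 : ℂ)⁻¹ • (M + adjoint M) - z • F) = 1) :
    ((1 : E →L[ℂ] E) +
        Complex.I • ((adjoint K ∘L Sinv ∘L K) ∘L J)) ∘L
      ((1 : E →L[ℂ] E) +
        ((1 : E →L[ℂ] E) - (2 * Complex.I) • (adjoint K ∘L Rinv ∘L (K ∘L J)))) = (2 : ℂ) • 1 := by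
  have hMM : M = adjoint M + (2 * Complex.I) • (K ∘L J ∘L adjoint K) := by
    have h := congrArg (fun T => (2 * Complex.I) • T) hIm
    simp only [smul_smul, mul_inv_cancel₀ (by simp [Complex.I_ne_zero] : (2 : ℂ) * Complex.I ≠ 0),
      one_smul] at h
    rw [← h]; abel
  have hA : M - z • F = ((2:ℂ)⁻¹ • (M + adjoint M) - z • F)
      + Complex.I • (K ∘L J ∘L adjoint K) := by
    linear_combination (norm := module) ((2:ℂ)⁻¹) • hMM
  have e1 : Complex.I • Sinv = Sinv ∘L ((Complex.I • (M - z • F)) ∘L Rinv) := by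
    simp [smul_comp, hRinv₁, comp_smul, one_def, comp_id]
  have e2 : Complex.I • Rinv =
      Sinv ∘L ((Complex.I • ((2:ℂ)⁻¹ • (M + adjoint M) - z • F)) ∘L Rinv) := by
    simp only [smul_comp, comp_smul, ← comp_assoc, hSinv₂, one_def, id_comp]
  have hin : Complex.I • (M - z • F) - Complex.I • ((2:ℂ)⁻¹ • (M + adjoint M) - z • F)
      + (K ∘L J ∘L adjoint K) = 0 := by
    rw [hA, smul_add, smul_smul, Complex.I_mul_I]
    module
  have key : Complex.I • Sinv - Complex.I • Rinv + Sinv ∘L ((K ∘L J ∘L adjoint K) ∘L Rinv) = 0 := by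
    rw [e1, e2, ← comp_sub, ← sub_comp, ← comp_add, ← add_comp, hin]
    simp
  have key2 := congrArg (fun T => adjoint K ∘L (T ∘L (K ∘L J))) key
  simp only [sub_comp, add_comp, smul_comp, comp_smul, comp_sub, comp_add, zero_comp, comp_zero,
    comp_assoc] at key2
  rw [two_smul]
  simp only [comp_add, add_comp, comp_sub, sub_comp, smul_comp, comp_smul, one_def, comp_id,
    id_comp, smul_add, smul_smul, comp_assoc]
  rw [show 2 * Complex.I * Complex.I = -2 by rw [mul_assoc, Complex.I_mul_I]; ring]
  linear_combination (norm := module) (2:ℂ) • key2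
end

section
/- Let H and E be complex Hilbert spaces, let J : E → E be a bounded self-adjoint involution (J = J* and J∘J = I), let K : E → H be a bounded operator, and let M : H → H and F : H → H be bounded operators with (M − M*)/(2i) = KJK*. Let z ∈ ℂ be such that both M − zF and Re M − zF are invertible, where Re M = (M + M*)/2. Set W(z) = I − 2i·K*(M − zF)⁻¹KJ and V(z) = K*(Re M − zF)⁻¹K. Then the operators I + W(z) and I + i·V(z)J are both invertible on E, and V(z) = i·(W(z) − I)(W(z) + I)⁻¹J = i·(W(z) + I)⁻¹(W(z) − I)J, and W(z) = (I − i·V(z)J)(I + i·V(z)J)⁻¹ = (I + i·V(z)J)⁻¹(I − i·V(z)J). -/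
/-!
With `A = M - zF` and `S = Re M - zF` the hypothesis on `Im M` reads `A - S = i KJK*`, so the
resolvent identity `A⁻¹ - S⁻¹ = A⁻¹ (S - A) S⁻¹ = S⁻¹ (S - A) A⁻¹` shows that
`u = i K*A⁻¹KJ` and `t = i K*S⁻¹KJ = i V J` satisfy `u t = t u = t - u`. Hence `1 - u` and `1 + t`
are inverse to each other, and since `W = 1 - 2u`, the operators `W` and `i V J` are each other's
Cayley transforms.
-/

open ContinuousLinearMap

section CayleyTransform

variable {R : Type*} [Ring R] {u t : R}

theorem one_sub_mul_one_add_of_mul_eq_sub (hut : u * t = t - u) : (1 - u) * (1 + t) = 1 :=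
  calc (1 - u) * (1 + t) = 1 + (t - u) - u * t := by noncomm_ring
    _ = 1 := by rw [hut, add_sub_cancel_right]

theorem one_add_mul_one_sub_of_mul_eq_sub (htu : t * u = t - u) : (1 + t) * (1 - u) = 1 :=
  calc (1 + t) * (1 - u) = 1 + (t - u) - t * u := by noncomm_ring
    _ = 1 := by rw [htu, add_sub_cancel_right]

theorem isUnit_one_add_of_mul_eq_sub (hut : u * t = t - u) (htu : t * u = t - u) :
    IsUnit (1 + t) :=
  ⟨⟨1 + t, 1 - u, one_add_mul_one_sub_of_mul_eq_sub htu, one_sub_mul_one_add_of_mul_eq_sub hut⟩,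
    rfl⟩

theorem inverse_one_add_of_mul_eq_sub (hut : u * t = t - u) (htu : t * u = t - u) :
    Ring.inverse (1 + t) = 1 - u :=
  Ring.inverse_unit
    ⟨1 + t, 1 - u, one_add_mul_one_sub_of_mul_eq_sub htu, one_sub_mul_one_add_of_mul_eq_sub hut⟩

variable {𝕜 : Type*} [Field 𝕜] [Algebra 𝕜 R] {W : R}

theorem one_sub_mul_inverse_one_add_of_mul_eq_sub (hW : W = 1 - (2 : 𝕜) • u)
    (hut : u * t = t - u) (htu : t * u = t - u) :
    (1 - t) * Ring.inverse (1 + t) = W := by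
  rw [inverse_one_add_of_mul_eq_sub hut htu, hW]
  calc (1 - t) * (1 - u) = 1 - u - (t - t * u) := by noncomm_ring
    _ = 1 - (2 : 𝕜) • u := by rw [htu]; module

theorem inverse_one_add_mul_one_sub_of_mul_eq_sub (hW : W = 1 - (2 : 𝕜) • u)
    (hut : u * t = t - u) (htu : t * u = t - u) :
    Ring.inverse (1 + t) * (1 - t) = W := by
  rw [inverse_one_add_of_mul_eq_sub hut htu, hW]
  calc (1 - u) * (1 - t) = 1 - u - (t - u * t) := by noncomm_ring
    _ = 1 - (2 : 𝕜) • u := by rw [hut]; module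

variable [NeZero (2 : 𝕜)]

theorem one_add_mul_two_inv_smul_one_add (hW : W = 1 - (2 : 𝕜) • u) (hut : u * t = t - u) :
    (1 + W) * ((2 : 𝕜)⁻¹ • (1 + t)) = 1 := by
  rw [show 1 + W = (2 : 𝕜) • (1 - u) by rw [hW]; module, smul_mul_smul_comm,
    one_sub_mul_one_add_of_mul_eq_sub hut, mul_inv_cancel₀ two_ne_zero, one_smul]

theorem two_inv_smul_one_add_mul_one_add (hW : W = 1 - (2 : 𝕜) • u) (htu : t * u = t - u) :
    ((2 : 𝕜)⁻¹ • (1 + t)) * (1 + W) = 1 := by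
  rw [show 1 + W = (2 : 𝕜) • (1 - u) by rw [hW]; module, smul_mul_smul_comm,
    one_add_mul_one_sub_of_mul_eq_sub htu, inv_mul_cancel₀ two_ne_zero, one_smul]

theorem isUnit_one_add_of_eq_one_sub_two_smul (hW : W = 1 - (2 : 𝕜) • u)
    (hut : u * t = t - u) (htu : t * u = t - u) : IsUnit (1 + W) :=
  ⟨⟨1 + W, _, one_add_mul_two_inv_smul_one_add hW hut, two_inv_smul_one_add_mul_one_add hW htu⟩,
    rfl⟩

theorem inverse_one_add_of_eq_one_sub_two_smul (hW : W = 1 - (2 : 𝕜) • u)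
    (hut : u * t = t - u) (htu : t * u = t - u) :
    Ring.inverse (1 + W) = (2 : 𝕜)⁻¹ • (1 + t) :=
  Ring.inverse_unit
    ⟨1 + W, _, one_add_mul_two_inv_smul_one_add hW hut, two_inv_smul_one_add_mul_one_add hW htu⟩

theorem sub_one_mul_inverse_one_add_of_eq_one_sub_two_smul (hW : W = 1 - (2 : 𝕜) • u)
    (hut : u * t = t - u) (htu : t * u = t - u) :
    (W - 1) * Ring.inverse (1 + W) = -t := by
  rw [inverse_one_add_of_eq_one_sub_two_smul hW hut htu, hW, sub_sub_cancel_left, neg_mul,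
    smul_mul_smul_comm, mul_one_add, hut, mul_inv_cancel₀ two_ne_zero, one_smul, add_sub_cancel]

theorem inverse_one_add_mul_sub_one_of_eq_one_sub_two_smul (hW : W = 1 - (2 : 𝕜) • u)
    (hut : u * t = t - u) (htu : t * u = t - u) :
    Ring.inverse (1 + W) * (W - 1) = -t := by
  rw [inverse_one_add_of_eq_one_sub_two_smul hW hut htu, hW, sub_sub_cancel_left, mul_neg,
    smul_mul_smul_comm, one_add_mul, htu, inv_mul_cancel₀ two_ne_zero, one_smul, add_sub_cancel]

end CayleyTransform

section Resolvent

variable {𝕜 E H : Type*} [NormedField 𝕜] [SeminormedAddCommGroup E] [NormedSpace 𝕜 E]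
  [SeminormedAddCommGroup H] [NormedSpace 𝕜 H] {P : E →L[𝕜] H} {Q : H →L[𝕜] E}
  {A S A' S' : H →L[𝕜] H}

theorem comp_comp_mul_comp_comp_of_comp_eq_sub (hPQ : P ∘L Q = A - S) (hA : A' ∘L A = 1)
    (hS : S ∘L S' = 1) :
    (Q ∘L A' ∘L P) * (Q ∘L S' ∘L P) = Q ∘L S' ∘L P - Q ∘L A' ∘L P :=
  calc (Q ∘L A' ∘L P) * (Q ∘L S' ∘L P) = Q ∘L (A' ∘L (P ∘L Q) ∘L S') ∘L P := by
        simp only [mul_def, comp_assoc]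
    _ = Q ∘L S' ∘L P - Q ∘L A' ∘L P := by
        rw [hPQ, sub_comp, comp_sub, ← comp_assoc A' A, hA, hS, one_def, id_comp, comp_id, sub_comp,
          comp_sub]

theorem comp_comp_mul_comp_comp_of_comp_eq_sub' (hPQ : P ∘L Q = A - S) (hA : A ∘L A' = 1)
    (hS : S' ∘L S = 1) :
    (Q ∘L S' ∘L P) * (Q ∘L A' ∘L P) = Q ∘L S' ∘L P - Q ∘L A' ∘L P :=
  calc (Q ∘L S' ∘L P) * (Q ∘L A' ∘L P) = Q ∘L (S' ∘L (P ∘L Q) ∘L A') ∘L P := by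
        simp only [mul_def, comp_assoc]
    _ = Q ∘L S' ∘L P - Q ∘L A' ∘L P := by
        rw [hPQ, sub_comp, hA, comp_sub, ← comp_assoc S' S, hS, one_def, id_comp, comp_id, sub_comp,
          comp_sub]

end Resolvent

theorem stmt_5_general
    {H E : Type*}
    [NormedAddCommGroup H] [InnerProductSpace ℂ H] [CompleteSpace H]
    [NormedAddCommGroup E] [InnerProductSpace ℂ E] [CompleteSpace E]
    (J : E →L[ℂ] E) (hJinv : J ∘L J = 1)
    (K : E →L[ℂ] H) (M F : H →L[ℂ] H)
    (hIm : (2 * Complex.I)⁻¹ • (M - adjoint M) = K ∘L J ∘L adjoint K)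
    (z : ℂ)
    (Rinv : H →L[ℂ] H)
    (hRinv₁ : (M - z • F) ∘L Rinv = 1) (hRinv₂ : Rinv ∘L (M - z • F) = 1)
    (Sinv : H →L[ℂ] H)
    (hSinv₁ : ((2 : ℂ)⁻¹ • (M + adjoint M) - z • F) ∘L Sinv = 1)
    (hSinv₂ : Sinv ∘L ((2 : ℂ)⁻¹ • (M + adjoint M) - z • F) = 1)
    (W V : E →L[ℂ] E)
    (hW : W = 1 - (2 * Complex.I) • (adjoint K ∘L Rinv ∘L (K ∘L J)))
    (hV : V = adjoint K ∘L Sinv ∘L K) :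
    IsUnit (1 + W) ∧ IsUnit (1 + Complex.I • (V ∘L J)) ∧
    V = Complex.I • ((W - 1) * Ring.inverse (1 + W) * J) ∧
    V = Complex.I • (Ring.inverse (1 + W) * (W - 1) * J) ∧
    W = (1 - Complex.I • (V ∘L J)) * Ring.inverse (1 + Complex.I • (V ∘L J)) ∧
    W = Ring.inverse (1 + Complex.I • (V ∘L J)) * (1 - Complex.I • (V ∘L J)) := by
  set u := (Complex.I • adjoint K) ∘L Rinv ∘L (K ∘L J) with hu
  set t := Complex.I • (V ∘L J) with ht_def
  have hKJK : (K ∘L J) ∘L (Complex.I • adjoint K) =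
      (M - z • F) - ((2 : ℂ)⁻¹ • (M + adjoint M) - z • F) := by
    have hI : Complex.I * (2 * Complex.I)⁻¹ = 2⁻¹ := by field_simp
    rw [comp_smul, comp_assoc, ← hIm, smul_smul, hI]
    module
  have ht : t = (Complex.I • adjoint K) ∘L Sinv ∘L (K ∘L J) := by
    rw [ht_def, hV, smul_comp]; rfl
  have hut : u * t = t - u := ht ▸ comp_comp_mul_comp_comp_of_comp_eq_sub hKJK hRinv₂ hSinv₁
  have htu : t * u = t - u := ht ▸ comp_comp_mul_comp_comp_of_comp_eq_sub' hKJK hRinv₁ hSinv₂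
  have hWu : W = 1 - (2 : ℂ) • u := by rw [hW, hu, smul_comp, smul_smul]
  have htJ : Complex.I • (t * J) = -V := by
    rw [smul_mul_assoc, mul_def, comp_assoc, hJinv, ← mul_def, mul_one, smul_smul,
      Complex.I_mul_I, neg_one_smul]
  refine ⟨isUnit_one_add_of_eq_one_sub_two_smul hWu hut htu, isUnit_one_add_of_mul_eq_sub hut htu,
    ?_, ?_, (one_sub_mul_inverse_one_add_of_mul_eq_sub hWu hut htu).symm,
    (inverse_one_add_mul_one_sub_of_mul_eq_sub hWu hut htu).symm⟩
  · rw [sub_one_mul_inverse_one_add_of_eq_one_sub_two_smul hWu hut htu, neg_mul, smul_neg, htJ,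
      neg_neg]
  · rw [inverse_one_add_mul_sub_one_of_eq_one_sub_two_smul hWu hut htu, neg_mul, smul_neg, htJ,
      neg_neg]

/-- For an `F`-system with `Im M = KJK*`, transfer function
`W(z) = I - 2iK*(M - zF)⁻¹KJ` and impedance function
`V(z) = K*(Re M - zF)⁻¹K`, the operators `I + W(z)` and `I + iV(z)J` are
invertible, `V(z) = i(W(z) - I)(W(z) + I)⁻¹J = i(W(z) + I)⁻¹(W(z) - I)J` and
`W(z) = (I - iV(z)J)(I + iV(z)J)⁻¹ = (I + iV(z)J)⁻¹(I - iV(z)J)`. -/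
theorem stmt_5
    {H E : Type*}
    [NormedAddCommGroup H] [InnerProductSpace ℂ H] [CompleteSpace H]
    [NormedAddCommGroup E] [InnerProductSpace ℂ E] [CompleteSpace E]
    (J : E →L[ℂ] E) (hJsa : adjoint J = J) (hJinv : J ∘L J = 1)
    (K : E →L[ℂ] H) (M F : H →L[ℂ] H)
    (hIm : (2 * Complex.I)⁻¹ • (M - adjoint M) = K ∘L J ∘L adjoint K)
    (z : ℂ)
    (Rinv : H →L[ℂ] H)
    (hRinv₁ : (M - z • F) ∘L Rinv = 1) (hRinv₂ : Rinv ∘L (M - z • F) = 1)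
    (Sinv : H →L[ℂ] H)
    (hSinv₁ : ((2 : ℂ)⁻¹ • (M + adjoint M) - z • F) ∘L Sinv = 1)
    (hSinv₂ : Sinv ∘L ((2 : ℂ)⁻¹ • (M + adjoint M) - z • F) = 1)
    (W V : E →L[ℂ] E)
    (hW : W = 1 - (2 * Complex.I) • (adjoint K ∘L Rinv ∘L (K ∘L J)))
    (hV : V = adjoint K ∘L Sinv ∘L K) :
    IsUnit (1 + W) ∧ IsUnit (1 + Complex.I • (V ∘L J)) ∧
    V = Complex.I • ((W - 1) * Ring.inverse (1 + W) * J) ∧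
    V = Complex.I • (Ring.inverse (1 + W) * (W - 1) * J) ∧
    W = (1 - Complex.I • (V ∘L J)) * Ring.inverse (1 + Complex.I • (V ∘L J)) ∧
    W = Ring.inverse (1 + Complex.I • (V ∘L J)) * (1 - Complex.I • (V ∘L J)) :=
  stmt_5_general J hJinv K M F hIm z Rinv hRinv₁ hRinv₂ Sinv hSinv₁ hSinv₂ W V hW hV
end

section
/- Let Q be a nonzero real number and let α ∈ [0, π) with α ≠ π/2. Then (cos α + (sin α)·(Q + i))/(sin α − (cos α)·(Q + i)) = −Q + i if and only if tan α = Q/2. (The denominator sin α − (cos α)·(Q + i) is nonzero since its imaginary part −cos α is nonzero.) -/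
open Complex

/-- The real part of the equation reads `c + s Q = c Q² + c - s Q`; the imaginary parts agree
identically. -/
theorem div_eq_neg_add_I_iff {c s Q : ℝ} (hc : c ≠ 0) (hQ : Q ≠ 0) :
    ((c : ℂ) + s * (Q + I)) / (s - c * (Q + I)) = -Q + I ↔ 2 * s = c * Q := by
  have hden : (s : ℂ) - c * (Q + I) ≠ 0 := fun h ↦ hc <| by
    simpa using congrArg Complex.im h
  rw [div_eq_iff hden, Complex.ext_iff]
  simp only [add_re, add_im, mul_re, mul_im, sub_re, sub_im, neg_re, neg_im,
    ofReal_re, ofReal_im, I_re, I_im]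
  constructor
  · rintro ⟨hre, -⟩
    exact mul_right_cancel₀ hQ (by linear_combination hre)
  · intro h
    exact ⟨by linear_combination Q * h, by ring⟩

theorem Real.cos_ne_zero_of_mem_Ico_of_ne {α : ℝ} (hα : α ∈ Set.Ico 0 Real.pi)
    (hα2 : α ≠ Real.pi / 2) : Real.cos α ≠ 0 := fun h ↦
  hα2 <| Real.injOn_cos (Set.Ico_subset_Icc_self hα)
    ⟨by linarith [Real.pi_pos], by linarith [Real.pi_pos]⟩ (by rw [h, Real.cos_pi_div_two])

/-- For a nonzero real `Q` and `α ∈ [0, π)` with `α ≠ π/2`, the unimodular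
transform of `Q + i` equals `-Q + i` if and only if `tan α = Q / 2`. -/
theorem stmt_8 (Q : ℝ) (hQ : Q ≠ 0) (α : ℝ) (hα : α ∈ Set.Ico 0 Real.pi)
    (hα2 : α ≠ Real.pi / 2) :
    ((Real.cos α : ℂ) + (Real.sin α : ℂ) * ((Q : ℂ) + Complex.I)) /
      ((Real.sin α : ℂ) - (Real.cos α : ℂ) * ((Q : ℂ) + Complex.I)) =
      -(Q : ℂ) + Complex.I ↔ Real.tan α = Q / 2 := by
  have hc := Real.cos_ne_zero_of_mem_Ico_of_ne hα hα2
  rw [div_eq_neg_add_I_iff hc hQ, Real.tan_eq_sin_div_cos, div_eq_div_iff hc two_ne_zero]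
  constructor <;> intro h <;> linarith
end

section
/- Let κ ∈ [0, 1), set a = (1 − κ)/(1 + κ), let Q be a nonzero real number, and set b = Q² + a² − 1. Let α ∈ [0, π) with α ≠ π/2. Then (cos α + (sin α)·(Q + a·i))/(sin α − (cos α)·(Q + a·i)) = −Q + a·i if and only if tan α = b/(2Q). (The denominator is nonzero since its imaginary part −a·cos α is nonzero.) -/
/-- For `κ ∈ [0, 1)`, `a = (1 - κ)/(1 + κ)`, nonzero real `Q`,
`b = Q² + a² - 1`, and `α ∈ [0, π)` with `α ≠ π/2`, the unimodular
transform of `Q + a·i` equals `-Q + a·i` if and only if `tan α = b/(2Q)`. -/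
theorem stmt_9 (κ : ℝ) (hκ : κ ∈ Set.Ico (0 : ℝ) 1) (Q : ℝ) (hQ : Q ≠ 0)
    (a b : ℝ) (ha : a = (1 - κ) / (1 + κ)) (hb : b = Q ^ 2 + a ^ 2 - 1)
    (α : ℝ) (hα : α ∈ Set.Ico 0 Real.pi) (hα2 : α ≠ Real.pi / 2) :
    ((Real.cos α : ℂ) + (Real.sin α : ℂ) * ((Q : ℂ) + (a : ℂ) * Complex.I)) /
      ((Real.sin α : ℂ) - (Real.cos α : ℂ) * ((Q : ℂ) + (a : ℂ) * Complex.I)) =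
      -(Q : ℂ) + (a : ℂ) * Complex.I ↔ Real.tan α = b / (2 * Q) := by
  obtain ⟨hα0, hαπ⟩ := hα
  have ha0 : a > 0 := by
    rw [ha]
    apply div_pos <;> linarith [hκ.1, hκ.2]
  have hc : Real.cos α ≠ 0 := by
    intro h
    rcases Real.cos_eq_zero_iff.mp h with ⟨n, hn⟩
    have hπ := Real.pi_pos
    have h1 : (0:ℝ) ≤ 2 * (n:ℝ) + 1 := by
      by_contra hneg; push_neg at hneg; nlinarith
    have h2 : 2 * (n:ℝ) + 1 < 2 := by
      by_contra hneg; push_neg at hneg; nlinarith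
    have h1' : (0:ℤ) ≤ 2 * n + 1 := by exact_mod_cast h1
    have h2' : (2:ℤ) * n + 1 < 2 := by exact_mod_cast h2
    have hn0 : n = 0 := by omega
    subst hn0
    apply hα2
    rw [hn]; push_cast; ring
  have hD : ((Real.sin α : ℂ) - (Real.cos α : ℂ) * ((Q : ℂ) + (a : ℂ) * Complex.I)) ≠ 0 := by
    intro h
    have him := congrArg Complex.im h
    simp [Complex.sub_im, Complex.mul_im, Complex.add_im, Complex.add_re,
      Complex.ofReal_im, Complex.ofReal_re, Complex.I_im, Complex.I_re,
      Complex.mul_re] at him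
    exact hc (by rcases him with h'|h'; exact h'; exact absurd h' (ne_of_gt ha0))
  rw [div_eq_iff hD, Real.tan_eq_sin_div_cos,
    div_eq_div_iff hc (by positivity : (2:ℝ)*Q ≠ 0)]
  subst hb
  rw [Complex.ext_iff]
  simp only [Complex.add_re, Complex.add_im, Complex.sub_re, Complex.sub_im,
    Complex.mul_re, Complex.mul_im, Complex.neg_re, Complex.neg_im,
    Complex.ofReal_re, Complex.ofReal_im, Complex.I_re, Complex.I_im]
  constructor
  · rintro ⟨h1, h2⟩
    nlinarith [h1]
  · intro h
    constructor <;> nlinarith [h]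
end

section
/- Let κ ∈ [0, 1), set a = (1 + κ)/(1 − κ), let Q be a nonzero real number, and set b = Q² + a² − 1. Let α ∈ [0, π) with α ≠ π/2. Then (cos α + (sin α)·(Q + a·i))/(sin α − (cos α)·(Q + a·i)) = −Q + a·i if and only if tan α = b/(2Q). (The denominator is nonzero since its imaginary part −a·cos α is nonzero.) -/
/-- For `κ ∈ [0, 1)`, `a = (1 + κ)/(1 - κ)`, nonzero real `Q`,
`b = Q² + a² - 1`, and `α ∈ [0, π)` with `α ≠ π/2`, the unimodular
transform of `Q + a·i` equals `-Q + a·i` if and only if `tan α = b/(2Q)`. -/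
theorem stmt_10 (κ : ℝ) (hκ : κ ∈ Set.Ico (0 : ℝ) 1) (Q : ℝ) (hQ : Q ≠ 0)
    (a b : ℝ) (ha : a = (1 + κ) / (1 - κ)) (hb : b = Q ^ 2 + a ^ 2 - 1)
    (α : ℝ) (hα : α ∈ Set.Ico 0 Real.pi) (hα2 : α ≠ Real.pi / 2) :
    ((Real.cos α : ℂ) + (Real.sin α : ℂ) * ((Q : ℂ) + (a : ℂ) * Complex.I)) /
      ((Real.sin α : ℂ) - (Real.cos α : ℂ) * ((Q : ℂ) + (a : ℂ) * Complex.I)) =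
      -(Q : ℂ) + (a : ℂ) * Complex.I ↔ Real.tan α = b / (2 * Q) := by
  have ha0 : 0 < a := by
    rw [ha]; exact div_pos (by linarith [hκ.1]) (by linarith [hκ.2])
  have hc : Real.cos α ≠ 0 := by
    intro h
    rcases Real.cos_eq_zero_iff.mp h with ⟨n, hn⟩
    have hpi := Real.pi_pos
    have h0 := hα.1
    have h1 := hα.2
    have hn0 : n = 0 := by
      rcases lt_trichotomy n 0 with h' | h' | h'
      · exfalso
        have hn1 : n ≤ -1 := by omega
        have : (n : ℝ) ≤ -1 := by exact_mod_cast hn1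
        nlinarith
      · exact h'
      · exfalso
        have : (1 : ℝ) ≤ (n : ℝ) := by exact_mod_cast h'
        nlinarith
    rw [hn0] at hn
    apply hα2
    rw [hn]; push_cast; ring
  have h2Q : (2 : ℝ) * Q ≠ 0 := by
    intro h; exact hQ (by linarith [mul_eq_zero.mp h])
  have hD : ((Real.sin α : ℂ) - (Real.cos α : ℂ) * ((Q : ℂ) + (a : ℂ) * Complex.I)) ≠ 0 := by
    intro h
    apply_fun Complex.im at h
    simp [Complex.sub_im, Complex.mul_im] at h
    rcases h with h | h
    · exact hc h
    · exact ha0.ne' h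
  rw [div_eq_iff hD, Complex.ext_iff]
  simp only [Complex.add_re, Complex.add_im, Complex.mul_re, Complex.mul_im, Complex.sub_re,
    Complex.sub_im, Complex.I_re, Complex.I_im, Complex.ofReal_re, Complex.ofReal_im,
    Complex.neg_re, Complex.neg_im]
  rw [Real.tan_eq_sin_div_cos, div_eq_div_iff hc h2Q, hb]
  constructor
  · rintro ⟨h1, h2⟩
    nlinarith [h1]
  · intro h
    constructor <;> nlinarith [h]
end

section
/- Let Q be a nonzero real number and let a > 0 be real. Then there exists a unique α ∈ [0, π) such that (cos α + (sin α)·(Q + a·i))/(sin α − (cos α)·(Q + a·i)) = −Q + a·i; moreover this α satisfies α ≠ π/2 and tan α = (Q² + a² − 1)/(2Q). -/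
open Real Complex

lemma stmt11_key (Q a : ℝ) (hQ : Q ≠ 0) (ha : 0 < a) (α : ℝ) :
    ((Real.cos α : ℂ) + (Real.sin α : ℂ) * ((Q : ℂ) + (a : ℂ) * Complex.I)) /
        ((Real.sin α : ℂ) - (Real.cos α : ℂ) * ((Q : ℂ) + (a : ℂ) * Complex.I)) =
        -(Q : ℂ) + (a : ℂ) * Complex.I ↔
    Real.cos α ≠ 0 ∧ Real.sin α * (2 * Q) = Real.cos α * (Q ^ 2 + a ^ 2 - 1) := by
  set c := Real.cos α with hcdef
  set s := Real.sin α with hsdef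
  constructor
  · intro h
    by_cases hc : c = 0
    · exfalso
      have hs : s ≠ 0 := by
        have := Real.sin_sq_add_cos_sq α
        rw [← hsdef, ← hcdef] at this
        intro h0; rw [h0, hc] at this; norm_num at this
      have hs' : (s : ℂ) ≠ 0 := by exact_mod_cast hs
      rw [hc] at h
      simp only [Complex.ofReal_zero, zero_mul, zero_add, sub_zero] at h
      rw [mul_div_cancel_left₀ _ hs'] at h
      have := congrArg Complex.re h
      simp at this
      exact hQ (by linarith)
    · refine ⟨hc, ?_⟩
      have hd : ((s : ℂ) - (c : ℂ) * ((Q : ℂ) + (a : ℂ) * Complex.I)) ≠ 0 := by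
        intro h0
        have := congrArg Complex.im h0
        simp [Complex.sub_im, Complex.mul_im] at this
        rcases this with h1 | h1
        · exact hc h1
        · exact ha.ne' h1
      rw [div_eq_iff hd] at h
      have hre := congrArg Complex.re h
      simp [Complex.add_re, Complex.mul_re, Complex.mul_im, Complex.sub_re, Complex.sub_im] at hre
      linear_combination hre
  · rintro ⟨hc, hrel⟩
    have hd : ((s : ℂ) - (c : ℂ) * ((Q : ℂ) + (a : ℂ) * Complex.I)) ≠ 0 := by
      intro h0
      have := congrArg Complex.im h0
      simp [Complex.sub_im, Complex.mul_im] at this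
      rcases this with h1 | h1
      · exact hc h1
      · exact ha.ne' h1
    rw [div_eq_iff hd]
    apply Complex.ext <;>
      simp [Complex.add_re, Complex.add_im, Complex.mul_re, Complex.mul_im, Complex.sub_re, Complex.sub_im] <;>
      nlinarith [hrel]

lemma stmt11_uniq (x y : ℝ) (hx : x ∈ Set.Ico 0 Real.pi) (hy : y ∈ Set.Ico 0 Real.pi)
    (h : Real.sin x * Real.cos y = Real.cos x * Real.sin y) : x = y := by
  have h0 : Real.sin (x - y) = 0 := by rw [Real.sin_sub]; linarith
  rw [Real.sin_eq_zero_iff] at h0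
  obtain ⟨n, hn⟩ := h0
  have hπ := Real.pi_pos
  obtain ⟨hx0, hx1⟩ := hx
  obtain ⟨hy0, hy1⟩ := hy
  have hb1 : (n : ℝ) < 1 := by nlinarith
  have hb2 : (-1 : ℝ) < n := by nlinarith
  have hb1' : n < 1 := by exact_mod_cast hb1
  have hb2' : (-1 : ℤ) < n := by exact_mod_cast hb2
  have : n = 0 := by omega
  rw [this] at hn; push_cast at hn; linarith

lemma stmt11_rel_of_tan (Q a α : ℝ) (h2Q : 2 * Q ≠ 0) (hc : Real.cos α ≠ 0)
    (htan : Real.tan α = (Q ^ 2 + a ^ 2 - 1) / (2 * Q)) :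
    Real.sin α * (2 * Q) = Real.cos α * (Q ^ 2 + a ^ 2 - 1) := by
  rw [Real.tan_eq_sin_div_cos, div_eq_div_iff hc h2Q] at htan
  linarith


/-- For a nonzero real `Q` and real `a > 0` there exists a unique `α ∈ [0, π)`
whose unimodular transform maps `Q + a·i` to `-Q + a·i`; moreover any such `α`
satisfies `α ≠ π/2` and `tan α = (Q² + a² - 1)/(2Q)`. -/
theorem stmt_11 (Q a : ℝ) (hQ : Q ≠ 0) (ha : 0 < a) :
    (∃! α : ℝ, α ∈ Set.Ico 0 Real.pi ∧
      ((Real.cos α : ℂ) + (Real.sin α : ℂ) * ((Q : ℂ) + (a : ℂ) * Complex.I)) /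
        ((Real.sin α : ℂ) - (Real.cos α : ℂ) * ((Q : ℂ) + (a : ℂ) * Complex.I)) =
        -(Q : ℂ) + (a : ℂ) * Complex.I) ∧
    ∀ α : ℝ, α ∈ Set.Ico 0 Real.pi →
      ((Real.cos α : ℂ) + (Real.sin α : ℂ) * ((Q : ℂ) + (a : ℂ) * Complex.I)) /
        ((Real.sin α : ℂ) - (Real.cos α : ℂ) * ((Q : ℂ) + (a : ℂ) * Complex.I)) =
        -(Q : ℂ) + (a : ℂ) * Complex.I →
      α ≠ Real.pi / 2 ∧ Real.tan α = (Q ^ 2 + a ^ 2 - 1) / (2 * Q) := by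
  have h2Q : 2 * Q ≠ 0 := mul_ne_zero two_ne_zero hQ
  have hπ := Real.pi_pos
  set t := (Q ^ 2 + a ^ 2 - 1) / (2 * Q) with ht
  set α₀ := if 0 ≤ Real.arctan t then Real.arctan t else Real.arctan t + Real.pi with hα₀
  have har1 := Real.arctan_lt_pi_div_two t
  have har2 := Real.neg_pi_div_two_lt_arctan t
  have hcar : 0 < Real.cos (Real.arctan t) := Real.cos_arctan_pos t
  have hmem : α₀ ∈ Set.Ico 0 Real.pi := by
    rw [hα₀]; split_ifs with h
    · exact ⟨h, by linarith⟩
    · constructor <;> push_neg at h <;> [linarith; linarith]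
  have hc0 : Real.cos α₀ ≠ 0 := by
    rw [hα₀]; split_ifs
    · exact hcar.ne'
    · rw [Real.cos_add_pi]; exact (neg_ne_zero.mpr hcar.ne')
  have htan0 : Real.tan α₀ = t := by
    rw [hα₀]; split_ifs
    · exact Real.tan_arctan t
    · rw [Real.tan_periodic (Real.arctan t), Real.tan_arctan]
  have hrel0 := stmt11_rel_of_tan Q a α₀ h2Q hc0 htan0
  constructor
  · refine ⟨α₀, ⟨hmem, (stmt11_key Q a hQ ha α₀).mpr ⟨hc0, hrel0⟩⟩, ?_⟩
    rintro β ⟨hβmem, hβeq⟩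
    obtain ⟨hcβ, hrelβ⟩ := (stmt11_key Q a hQ ha β).mp hβeq
    apply stmt11_uniq β α₀ hβmem hmem
    have h3 : Real.sin β * Real.cos α₀ * (2 * Q) = Real.cos β * Real.sin α₀ * (2 * Q) := by
      linear_combination Real.cos α₀ * hrelβ - Real.cos β * hrel0
    exact mul_right_cancel₀ h2Q h3
  · intro α hαmem hαeq
    obtain ⟨hcα, hrelα⟩ := (stmt11_key Q a hQ ha α).mp hαeq
    refine ⟨?_, ?_⟩
    · intro h; rw [h, Real.cos_pi_div_two] at hcα; exact hcα rfl
    · rw [Real.tan_eq_sin_div_cos, ht, div_eq_div_iff hcα h2Q]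
      linarith
end

section
/- Let H be a complex Hilbert space, K₁ : ℂ → H a bounded operator, A : H → H a bounded operator, α ∈ (0, π) with α ≠ π/2, and let z ∈ ℂ be such that A − zI is invertible. Define the block operators on H × ℂ by M̂(x, c) = (A x + 2i·c·K₁(1), (tan α + i)·c) and F̂(x, c) = (x, 0), and K : ℂ → H × ℂ by K c = (K₁ c, c). Then M̂ − zF̂ is invertible and the scalar transfer function satisfies 1 − 2i·⟨(M̂ − zF̂)⁻¹ K(1), K(1)⟩ = (1 − 2i·⟨(A − zI)⁻¹ K₁(1), K₁(1)⟩)·(−e^{2iα}), where ⟨·,·⟩ is the inner product (conjugate-linear in the second slot as appropriate so that the expression equals K*(M̂ − zF̂)⁻¹K applied to 1). -/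
/-!
Since `F̂` kills the scalar component, `M̂ - zF̂` is the upper triangular block operator
`[[A - z, 2i K₁(1)], [0, τ]]` with `τ = tan α + i ≠ 0`. Its inverse is again upper triangular,
`[[(A - z)⁻¹, -2i τ⁻¹ (A - z)⁻¹ K₁(1)], [0, τ⁻¹]]`, so `(M̂ - zF̂)⁻¹ K(1)` is explicit and the
transfer function factors as `(1 - 2i⟨K₁(1), (A - z)⁻¹ K₁(1)⟩)(1 - 2i/τ)`. Finally
`cos α · (tan α + i) = i e^{-iα}` gives `1 - 2i/(tan α + i) = 1 - 2 cos α e^{iα} = -e^{2iα}`.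
-/

open ContinuousLinearMap
open scoped ENNReal InnerProductSpace

namespace WithLp

variable {𝕜 E : Type*} [NormedField 𝕜] [NormedAddCommGroup E] [NormedSpace 𝕜 E] (p : ℝ≥0∞)

-- The block operator `[[T, u], [0, τ]]` on `E × 𝕜`.
noncomputable def upperTriangular (T : E →L[𝕜] E) (u : E) (τ : 𝕜) :
    WithLp p (E × 𝕜) →L[𝕜] WithLp p (E × 𝕜) :=
  (prodContinuousLinearEquiv p 𝕜 E 𝕜).symm.toContinuousLinearMap ∘L
    ((T ∘L fst 𝕜 E 𝕜 + (snd 𝕜 E 𝕜).smulRight u).prod (τ • snd 𝕜 E 𝕜)) ∘L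
    (prodContinuousLinearEquiv p 𝕜 E 𝕜).toContinuousLinearMap

variable {p}

@[simp]
theorem upperTriangular_apply (T : E →L[𝕜] E) (u : E) (τ : 𝕜) (x : E) (c : 𝕜) :
    upperTriangular p T u τ (toLp p (x, c)) = toLp p (T x + c • u, τ * c) :=
  rfl

theorem upperTriangular_comp (T T' : E →L[𝕜] E) (u u' : E) (τ τ' : 𝕜) :
    upperTriangular p T u τ ∘L upperTriangular p T' u' τ' =
      upperTriangular p (T ∘L T') (T u' + τ' • u) (τ * τ') := by
  ext ⟨x, c⟩
  simp only [comp_apply, upperTriangular_apply]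
  congr 2
  · rw [map_add, map_smul]
    module
  · ring

theorem upperTriangular_one_zero_one : upperTriangular p (1 : E →L[𝕜] E) 0 (1 : 𝕜) = 1 := by
  ext ⟨x, c⟩
  simp

variable {T S : E →L[𝕜] E} {τ : 𝕜}

theorem upperTriangular_comp_inv (hTS : T ∘L S = 1) (u : E) (hτ : τ ≠ 0) :
    upperTriangular p T u τ ∘L upperTriangular p S (-τ⁻¹ • S u) τ⁻¹ = 1 := by
  have hu : T (S u) = u := by simpa using DFunLike.congr_fun hTS u
  rw [upperTriangular_comp, hTS, map_smul, hu, neg_smul, neg_add_cancel, mul_inv_cancel₀ hτ,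
    upperTriangular_one_zero_one]

theorem inv_comp_upperTriangular (hST : S ∘L T = 1) (u : E) (hτ : τ ≠ 0) :
    upperTriangular p S (-τ⁻¹ • S u) τ⁻¹ ∘L upperTriangular p T u τ = 1 := by
  rw [upperTriangular_comp, hST, smul_smul, mul_neg, mul_inv_cancel₀ hτ, neg_one_smul,
    add_neg_cancel, inv_mul_cancel₀ hτ, upperTriangular_one_zero_one]

theorem isUnit_upperTriangular (hTS : T ∘L S = 1) (hST : S ∘L T = 1) (u : E) (hτ : τ ≠ 0) :
    IsUnit (upperTriangular p T u τ) :=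
  ⟨⟨_, _, upperTriangular_comp_inv hTS u hτ, inv_comp_upperTriangular hST u hτ⟩, rfl⟩

theorem eq_upperTriangular_of_comp_eq_one {R : WithLp p (E × 𝕜) →L[𝕜] WithLp p (E × 𝕜)} {u : E}
    (hR : R ∘L upperTriangular p T u τ = 1) (hTS : T ∘L S = 1) (hτ : τ ≠ 0) :
    R = upperTriangular p S (-τ⁻¹ • S u) τ⁻¹ :=
  left_inv_eq_right_inv hR (upperTriangular_comp_inv hTS u hτ)

end WithLp

theorem Real.cos_ne_zero_of_mem_Ioo_of_ne_pi_div_two {α : ℝ} (hα : α ∈ Set.Ioo 0 Real.pi)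
    (hα2 : α ≠ Real.pi / 2) : Real.cos α ≠ 0 := fun h =>
  hα2 <| Real.injOn_cos ⟨hα.1.le, hα.2.le⟩ ⟨by positivity, by linarith [Real.pi_pos]⟩
    (h.trans Real.cos_pi_div_two.symm)

namespace Complex

theorem ofReal_tan_add_I_ne_zero (α : ℝ) : (Real.tan α : ℂ) + I ≠ 0 := fun h => by
  simpa using congrArg im h

theorem one_sub_two_I_div_tan_add_I {α : ℝ} (h : Real.cos α ≠ 0) :
    1 - 2 * I / (Real.tan α + I) = -exp (2 * I * α) := by
  have hτ := ofReal_tan_add_I_ne_zero α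
  have hcos : cos α ≠ 0 := by exact_mod_cast h
  rw [ofReal_tan, tan_eq_sin_div_cos, div_add' _ _ _ hcos] at hτ ⊢
  rw [show 2 * I * (α : ℂ) = 2 * α * I by ring, exp_mul_I, cos_two_mul, sin_two_mul]
  have hden := (div_ne_zero_iff.mp hτ).1
  field_simp
  linear_combination (2 * I * cos α) * sin_sq_add_cos_sq (α : ℂ) +
      (2 * sin α * cos α ^ 2) * I_sq

end Complex

open Complex WithLp in
theorem stmt_17_general
    {H : Type*} [NormedAddCommGroup H] [InnerProductSpace ℂ H]
    (K₁ : ℂ →L[ℂ] H) (A : H →L[ℂ] H)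
    (α : ℝ) (hα : α ∈ Set.Ioo 0 Real.pi) (hα2 : α ≠ Real.pi / 2)
    (z : ℂ) (Ainv : H →L[ℂ] H)
    (hAinv₁ : (A - z • 1) ∘L Ainv = 1) (hAinv₂ : Ainv ∘L (A - z • 1) = 1)
    (Mhat Fhat : WithLp 2 (H × ℂ) →L[ℂ] WithLp 2 (H × ℂ))
    (hMhat : ∀ (x : H) (c : ℂ),
      Mhat ((WithLp.equiv 2 (H × ℂ)).symm (x, c)) =
        (WithLp.equiv 2 (H × ℂ)).symm
          (A x + (2 * Complex.I * c) • K₁ 1, ((Real.tan α : ℂ) + Complex.I) * c))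
    (hFhat : ∀ (x : H) (c : ℂ),
      Fhat ((WithLp.equiv 2 (H × ℂ)).symm (x, c)) =
        (WithLp.equiv 2 (H × ℂ)).symm (x, 0))
    (K : ℂ →L[ℂ] WithLp 2 (H × ℂ))
    (hK : ∀ c : ℂ, K c = (WithLp.equiv 2 (H × ℂ)).symm (K₁ c, c)) :
    IsUnit (Mhat - z • Fhat) ∧
    ∀ R : WithLp 2 (H × ℂ) →L[ℂ] WithLp 2 (H × ℂ),
      (Mhat - z • Fhat) ∘L R = 1 → R ∘L (Mhat - z • Fhat) = 1 →
      1 - 2 * Complex.I * ⟪K 1, R (K 1)⟫_ℂ =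
        (1 - 2 * Complex.I * ⟪K₁ 1, Ainv (K₁ 1)⟫_ℂ) *
          (-Complex.exp (2 * Complex.I * (α : ℂ))) := by
  simp only [equiv_symm_apply] at hMhat hFhat hK
  set τ : ℂ := Real.tan α + I
  have hτ : τ ≠ 0 := ofReal_tan_add_I_ne_zero α
  have hB : Mhat - z • Fhat = upperTriangular 2 (A - z • 1) ((2 * I) • K₁ 1) τ := by
    ext ⟨x, c⟩
    simp only [sub_apply, smul_apply, one_apply_eq_self, hMhat, hFhat, upperTriangular_apply,
      ← toLp_smul, ← toLp_sub, Prod.smul_mk, Prod.mk_sub_mk, smul_zero, sub_zero, smul_smul]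
    congr 2
    module
  rw [hB]
  refine ⟨isUnit_upperTriangular hAinv₁ hAinv₂ _ hτ, fun R _ hR => ?_⟩
  have hexp : -exp (2 * I * α) = 1 - 2 * I / τ :=
    (one_sub_two_I_div_tan_add_I (Real.cos_ne_zero_of_mem_Ioo_of_ne_pi_div_two hα hα2)).symm
  rw [eq_upperTriangular_of_comp_eq_one hR hAinv₁ hτ, hK, upperTriangular_apply, prod_inner_apply,
    hexp]
  simp only [map_smul, inner_add_right, inner_smul_right, one_smul, mul_one, RCLike.inner_apply,
    map_one]
  field_simp
  ring

/-- Coupling a scalar-input `L`-system with the controller `Θ₀,α`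
(state operator `tan α + i`, `F = 0`, `K = 1`, `J = 1`) multiplies the
transfer function by `-e^{2iα}`: the block operator `M̂ - zF̂` with
`M̂(x, c) = (Ax + 2ic·K₁(1), (tan α + i)c)` and `F̂(x, c) = (x, 0)` is
invertible, and for its inverse `R`,
`1 - 2i⟨K(1), R(K(1))⟩ = (1 - 2i⟨K₁(1), (A - zI)⁻¹K₁(1)⟩)·(-e^{2iα})`
(the inner product is conjugate-linear in the first slot, so that these
scalars equal `K*(M̂ - zF̂)⁻¹K` and `K₁*(A - zI)⁻¹K₁` applied to `1`). -/
theorem stmt_17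
    {H : Type*} [NormedAddCommGroup H] [InnerProductSpace ℂ H] [CompleteSpace H]
    (K₁ : ℂ →L[ℂ] H) (A : H →L[ℂ] H)
    (α : ℝ) (hα : α ∈ Set.Ioo 0 Real.pi) (hα2 : α ≠ Real.pi / 2)
    (z : ℂ) (Ainv : H →L[ℂ] H)
    (hAinv₁ : (A - z • 1) ∘L Ainv = 1) (hAinv₂ : Ainv ∘L (A - z • 1) = 1)
    (Mhat Fhat : WithLp 2 (H × ℂ) →L[ℂ] WithLp 2 (H × ℂ))
    (hMhat : ∀ (x : H) (c : ℂ),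
      Mhat ((WithLp.equiv 2 (H × ℂ)).symm (x, c)) =
        (WithLp.equiv 2 (H × ℂ)).symm
          (A x + (2 * Complex.I * c) • K₁ 1, ((Real.tan α : ℂ) + Complex.I) * c))
    (hFhat : ∀ (x : H) (c : ℂ),
      Fhat ((WithLp.equiv 2 (H × ℂ)).symm (x, c)) =
        (WithLp.equiv 2 (H × ℂ)).symm (x, 0))
    (K : ℂ →L[ℂ] WithLp 2 (H × ℂ))
    (hK : ∀ c : ℂ, K c = (WithLp.equiv 2 (H × ℂ)).symm (K₁ c, c)) :
    IsUnit (Mhat - z • Fhat) ∧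
    ∀ R : WithLp 2 (H × ℂ) →L[ℂ] WithLp 2 (H × ℂ),
      (Mhat - z • Fhat) ∘L R = 1 → R ∘L (Mhat - z • Fhat) = 1 →
      1 - 2 * Complex.I * ⟪K 1, R (K 1)⟫_ℂ =
        (1 - 2 * Complex.I * ⟪K₁ 1, Ainv (K₁ 1)⟫_ℂ) *
          (-Complex.exp (2 * Complex.I * (α : ℂ))) :=
  stmt_17_general K₁ A α hα hα2 z Ainv hAinv₁ hAinv₂ Mhat Fhat hMhat hFhat K hK
end

section
/- Let l > 0 be real. For every z ∈ ℂ with Im z > 0 one has 1 + e^{izl} ≠ 0 and Im( i·(1 − e^{izl})/(1 + e^{izl}) ) > 0; moreover at z = i the function takes the value i·(1 − e^{−l})/(1 + e^{−l}), i.e., i·(1 − κ)/(1 + κ) with κ = e^{−l} ∈ (0, 1). -/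
/-! The map `w ↦ i(1 - w)/(1 + w)` sends the open unit disc into the upper half-plane, since
`Im (i(1 - w)/(1 + w)) = (1 - |w|²)/|1 + w|²`, and `z ↦ e^{izl}` sends the upper half-plane into
the unit disc, since `|e^{izl}| = e^{-l Im z}`. At `z = i` the exponential is the real number
`e^{-l} ∈ (0, 1)`. -/

namespace Complex

theorem one_add_ne_zero_of_norm_lt_one {w : ℂ} (hw : ‖w‖ < 1) : 1 + w ≠ 0 := by
  intro h
  rw [eq_neg_of_add_eq_zero_right h, norm_neg, norm_one] at hw
  exact lt_irrefl 1 hw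

theorem im_I_mul_one_sub_div_one_add (w : ℂ) :
    (I * (1 - w) / (1 + w)).im = (1 - normSq w) / normSq (1 + w) := by
  rw [div_im]
  simp only [mul_im, mul_re, I_re, I_im, sub_re, sub_im, add_re, add_im, one_re, one_im,
    normSq_apply]
  ring

theorem im_I_mul_one_sub_div_one_add_pos {w : ℂ} (hw : ‖w‖ < 1) :
    0 < (I * (1 - w) / (1 + w)).im := by
  rw [im_I_mul_one_sub_div_one_add]
  have hw2 : normSq w < 1 := by
    rw [normSq_eq_norm_sq]
    nlinarith [norm_nonneg w]
  exact div_pos (by linarith) (normSq_pos.2 (one_add_ne_zero_of_norm_lt_one hw))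

theorem norm_exp_I_mul_mul_ofReal_lt_one {z : ℂ} {l : ℝ} (hz : 0 < z.im) (hl : 0 < l) :
    ‖exp (I * z * l)‖ < 1 := by
  rw [norm_exp, Real.exp_lt_one_iff]
  simpa using mul_pos hz hl

end Complex

open Complex in
/-- For `l > 0`, the function `V(z) = i(1 - e^{izl})/(1 + e^{izl})` has
nonvanishing denominator on the open upper half-plane and maps it into
itself; moreover `V(i) = i(1 - e^{-l})/(1 + e^{-l})`, i.e.
`V(i) = i(1 - κ)/(1 + κ)` with `κ = e^{-l} ∈ (0, 1)`. -/
theorem stmt_18 (l : ℝ) (hl : 0 < l) :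
    (∀ z : ℂ, 0 < z.im →
      1 + Complex.exp (Complex.I * z * (l : ℂ)) ≠ 0 ∧
      0 < (Complex.I * (1 - Complex.exp (Complex.I * z * (l : ℂ))) /
        (1 + Complex.exp (Complex.I * z * (l : ℂ)))).im) ∧
    Complex.I * (1 - Complex.exp (Complex.I * Complex.I * (l : ℂ))) /
      (1 + Complex.exp (Complex.I * Complex.I * (l : ℂ))) =
      Complex.I * (((1 - Real.exp (-l)) / (1 + Real.exp (-l)) : ℝ) : ℂ) ∧
    Real.exp (-l) ∈ Set.Ioo (0 : ℝ) 1 := by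
  have hexp_i : exp (I * I * l) = (Real.exp (-l) : ℂ) := by
    rw [I_mul_I, neg_one_mul, ← ofReal_neg, ofReal_exp]
  refine ⟨fun z hz => ?_, ?_, Real.exp_pos _, Real.exp_lt_one_iff.2 (neg_lt_zero.2 hl)⟩
  · have hw := norm_exp_I_mul_mul_ofReal_lt_one hz hl
    exact ⟨one_add_ne_zero_of_norm_lt_one hw, im_I_mul_one_sub_div_one_add_pos hw⟩
  · rw [hexp_i]
    push_cast
    ring
end
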